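/- arXiv:1902.09405 — 6 statements merged into one kernel-verified Lean document; each statement's English description precedes it below -/
import Mathlib

section
/- Fix an integer n ≥ 2, ε ∈ {−1, 1}, and 𝔥 : ℝ → ℝ of class C¹ on a neighborhood of [−1,1]. Let (x, y) : I → (0,∞) × (−1,1) be a solution of the system x' = y, y' = (n−1)(1−y²)/x − nε𝔥(y)√(1−y²) on an open interval I, let s₀ ∈ I, and write x₀ = x(s₀), y₀ = y(s₀). Assume y₀ ≠ 0, ε𝔥(y₀) > 0, and x₀ = Γ_ε(y₀) = (n−1)√(1−y₀²)/(nε𝔥(y₀)). Then y'(s₀) = 0, y is twice differentiable at s₀ with y''(s₀) = −(n−1)(1−y₀²)y₀/x₀² ≠ 0, and s₀ is a strict local maximum of y if y₀ > 0 and a strict local minimum of y if y₀ < 0. -/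
/-!
On `Γ_ε` the second component of the vector field vanishes, so `y'(s₀) = 0`. Differentiating
`y' = (n-1)(1-y²)/x - g(y)`, `g(t) = nε𝔥(t)√(1-t²)`, at `s₀`, every term carrying the factor `y'(s₀)` drops out and only
`-(n-1)(1-y₀²) x'(s₀)/x₀² = -(n-1)(1-y₀²) y₀/x₀²` survives; it has the sign of `-y₀`, and a strict
form of the second derivative test gives the extremum.
-/

open Set Topology Filter

section StrictExtremum

variable {α β : Type*} [TopologicalSpace α] [Preorder β]

def IsStrictLocalMin (f : α → β) (a : α) : Prop := ∀ᶠ x in 𝓝[≠] a, f a < f x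

def IsStrictLocalMax (f : α → β) (a : α) : Prop := ∀ᶠ x in 𝓝[≠] a, f x < f a

end StrictExtremum

section SecondDerivativeTest

variable {f f' : ℝ → ℝ} {x₀ : ℝ}

theorem eventually_nhdsLT_lt_of_deriv_neg (hf : ∀ᶠ x in 𝓝 x₀, HasDerivAt f (f' x) x)
    (hf' : ∀ᶠ x in 𝓝[<] x₀, f' x < 0) : ∀ᶠ x in 𝓝[<] x₀, f x₀ < f x := by
  obtain ⟨l₁, hl₁, hd⟩ := exists_Ioc_subset_of_mem_nhds hf (exists_lt x₀)
  obtain ⟨l₂, hl₂, hneg⟩ := mem_nhdsLT_iff_exists_Ioo_subset.mp hf'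
  have hl : max l₁ l₂ < x₀ := max_lt hl₁ hl₂
  have hd' : ∀ x ∈ Ioc (max l₁ l₂) x₀, HasDerivAt f (f' x) x := fun x hx =>
    hd (Ioc_subset_Ioc_left (le_max_left _ _) hx)
  have hanti : StrictAntiOn f (Ioc (max l₁ l₂) x₀) := by
    refine strictAntiOn_of_hasDerivWithinAt_neg (f' := f') (convex_Ioc _ _)
      (HasDerivAt.continuousOn hd') (fun x hx => ?_) (fun x hx => ?_) <;>
      rw [interior_Ioc] at hx
    · exact (hd' x (Ioo_subset_Ioc_self hx)).hasDerivWithinAt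
    · exact hneg (Ioo_subset_Ioo_left (le_max_right _ _) hx)
  filter_upwards [Ioo_mem_nhdsLT hl] with x hx
  exact hanti ⟨hx.1, hx.2.le⟩ ⟨hl, le_rfl⟩ hx.2

theorem eventually_nhdsGT_lt_of_deriv_pos (hf : ∀ᶠ x in 𝓝 x₀, HasDerivAt f (f' x) x)
    (hf' : ∀ᶠ x in 𝓝[>] x₀, 0 < f' x) : ∀ᶠ x in 𝓝[>] x₀, f x₀ < f x := by
  obtain ⟨u₁, hu₁, hd⟩ := exists_Ico_subset_of_mem_nhds hf (exists_gt x₀)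
  obtain ⟨u₂, hu₂, hpos⟩ := mem_nhdsGT_iff_exists_Ioo_subset.mp hf'
  have hu : x₀ < min u₁ u₂ := lt_min hu₁ hu₂
  have hd' : ∀ x ∈ Ico x₀ (min u₁ u₂), HasDerivAt f (f' x) x := fun x hx =>
    hd (Ico_subset_Ico_right (min_le_left _ _) hx)
  have hmono : StrictMonoOn f (Ico x₀ (min u₁ u₂)) := by
    refine strictMonoOn_of_hasDerivWithinAt_pos (f' := f') (convex_Ico _ _)
      (HasDerivAt.continuousOn hd') (fun x hx => ?_) (fun x hx => ?_) <;>
      rw [interior_Ico] at hx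
    · exact (hd' x (Ioo_subset_Ico_self hx)).hasDerivWithinAt
    · exact hpos (Ioo_subset_Ioo_right (min_le_right _ _) hx)
  filter_upwards [Ioo_mem_nhdsGT hu] with x hx
  exact hmono ⟨le_rfl, hu⟩ ⟨hx.1.le, hx.2⟩ hx.1

theorem isStrictLocalMin_of_hasDerivAt_deriv_pos {D : ℝ}
    (hf : ∀ᶠ x in 𝓝 x₀, HasDerivAt f (f' x) x) (hf'₀ : f' x₀ = 0) (hD : HasDerivAt f' D x₀)
    (hD₀ : 0 < D) : IsStrictLocalMin f x₀ := by
  have hslope : ∀ᶠ x in 𝓝[≠] x₀, 0 < slope f' x₀ x :=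
    (hasDerivAt_iff_tendsto_slope.mp hD).eventually_const_lt hD₀
  rw [IsStrictLocalMin, ← nhdsLT_sup_nhdsGT, eventually_sup]
  constructor
  · refine eventually_nhdsLT_lt_of_deriv_neg hf ?_
    filter_upwards [nhdsLT_le_nhdsNE x₀ hslope, self_mem_nhdsWithin] with x hx hlt
    exact neg_of_slope_pos hlt hx hf'₀
  · refine eventually_nhdsGT_lt_of_deriv_pos hf ?_
    filter_upwards [nhdsGT_le_nhdsNE x₀ hslope, self_mem_nhdsWithin] with x hx hgt
    exact pos_of_slope_pos hgt hx hf'₀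

theorem isStrictLocalMax_of_hasDerivAt_deriv_neg {D : ℝ}
    (hf : ∀ᶠ x in 𝓝 x₀, HasDerivAt f (f' x) x) (hf'₀ : f' x₀ = 0) (hD : HasDerivAt f' D x₀)
    (hD₀ : D < 0) : IsStrictLocalMax f x₀ := by
  have hmin : IsStrictLocalMin (fun x => -f x) x₀ :=
    isStrictLocalMin_of_hasDerivAt_deriv_pos (f' := fun x => -f' x)
      (hf.mono fun _ h => h.neg) (by simp [hf'₀]) hD.neg (neg_pos.mpr hD₀)
  exact hmin.mono fun _ => neg_lt_neg_iff.mp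

end SecondDerivativeTest

theorem sub_mul_sqrt_eq_zero_of_eq_div {c A t x : ℝ} (hc : c ≠ 0) (ht : 0 ≤ 1 - t ^ 2)
    (hx : x = c * √(1 - t ^ 2) / A) : c * (1 - t ^ 2) / x - A * √(1 - t ^ 2) = 0 := by
  have hsq : c * (1 - t ^ 2) = c * √(1 - t ^ 2) * √(1 - t ^ 2) := by
    rw [mul_assoc, Real.mul_self_sqrt ht]
  rw [hx, hsq]
  rcases eq_or_ne (√(1 - t ^ 2)) 0 with hS | hS
  · simp [hS]
  rcases eq_or_ne A 0 with hA | hA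
  · simp [hA]
  field_simp
  ring

theorem hasDerivAt_div_sub_comp_of_hasDerivAt_zero {x y g : ℝ → ℝ} {s v : ℝ} (c : ℝ)
    (hx : HasDerivAt x v s) (hy : HasDerivAt y 0 s) (hxs : x s ≠ 0)
    (hg : DifferentiableAt ℝ g (y s)) :
    HasDerivAt (fun t => c * (1 - y t ^ 2) / x t - g (y t))
      (-c * (1 - y s ^ 2) * v / x s ^ 2) s := by
  have hnum : HasDerivAt (fun t => c * (1 - y t ^ 2)) 0 s := by
    simpa using ((hasDerivAt_const s 1).sub (hy.pow 2)).const_mul c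
  have hgy : HasDerivAt (fun t => g (y t)) 0 s :=
    (hg.hasDerivAt.comp s hy).congr_deriv (mul_zero _)
  exact ((hnum.fun_div hx hxs).sub hgy).congr_deriv (by ring)

theorem orbit_local_extremum_at_Gamma_general (n : ℕ) (hn : 2 ≤ n) (ε : ℝ)
    (𝔥 : ℝ → ℝ) (U : Set ℝ) (hU : IsOpen U) (hIccU : Set.Icc (-1 : ℝ) 1 ⊆ U)
    (h𝔥 : ContDiffOn ℝ 1 𝔥 U)
    (I : Set ℝ) (hIopen : IsOpen I)
    (x y V : ℝ → ℝ)
    (hmem : ∀ s ∈ I, 0 < x s ∧ y s ∈ Set.Ioo (-1 : ℝ) 1)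
    (hV : ∀ s ∈ I, V s = ((n : ℝ) - 1) * (1 - (y s) ^ 2) / x s
      - (n : ℝ) * ε * 𝔥 (y s) * Real.sqrt (1 - (y s) ^ 2))
    (hx : ∀ s ∈ I, HasDerivAt x (y s) s)
    (hy : ∀ s ∈ I, HasDerivAt y (V s) s)
    (s₀ : ℝ) (hs₀ : s₀ ∈ I) (x₀ y₀ : ℝ) (hx₀ : x₀ = x s₀) (hy₀ : y₀ = y s₀)
    (hy₀ne : y₀ ≠ 0)
    (hΓ : x₀ = ((n : ℝ) - 1) * Real.sqrt (1 - y₀ ^ 2) / ((n : ℝ) * ε * 𝔥 y₀)) :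
    V s₀ = 0 ∧
    HasDerivAt V (-((n : ℝ) - 1) * (1 - y₀ ^ 2) * y₀ / x₀ ^ 2) s₀ ∧
    -((n : ℝ) - 1) * (1 - y₀ ^ 2) * y₀ / x₀ ^ 2 ≠ 0 ∧
    (0 < y₀ → ∀ᶠ s in nhdsWithin s₀ {s₀}ᶜ, y s < y s₀) ∧
    (y₀ < 0 → ∀ᶠ s in nhdsWithin s₀ {s₀}ᶜ, y s₀ < y s) := by
  subst hx₀ hy₀
  obtain ⟨hx₀pos, hy₀mem⟩ := hmem s₀ hs₀
  have hn1 : (0 : ℝ) < n - 1 := by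
    have : (2 : ℝ) ≤ n := by exact_mod_cast hn
    linarith
  have hy₀sq : 0 < 1 - y s₀ ^ 2 := by nlinarith [hy₀mem.1, hy₀mem.2]
  have hV₀ : V s₀ = 0 := (hV s₀ hs₀).trans (sub_mul_sqrt_eq_zero_of_eq_div hn1.ne' hy₀sq.le hΓ)
  have hy₀U : y s₀ ∈ U := hIccU ⟨hy₀mem.1.le, hy₀mem.2.le⟩
  have hg : DifferentiableAt ℝ (fun t => (n : ℝ) * ε * 𝔥 t * √(1 - t ^ 2)) (y s₀) :=
    ((h𝔥.differentiableOn one_ne_zero _ hy₀U).differentiableAt (hU.mem_nhds hy₀U)).const_mul _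
      |>.mul (((differentiableAt_const 1).sub (differentiableAt_pow 2)).sqrt hy₀sq.ne')
  have hI : I ∈ 𝓝 s₀ := hIopen.mem_nhds hs₀
  have hV' := (hasDerivAt_div_sub_comp_of_hasDerivAt_zero ((n : ℝ) - 1) (hx s₀ hs₀)
    (hV₀ ▸ hy s₀ hs₀) hx₀pos.ne' hg).congr_of_eventuallyEq (eventually_of_mem hI hV)
  have hy' : ∀ᶠ s in 𝓝 s₀, HasDerivAt y (V s) s := eventually_of_mem hI hy
  have hK : 0 < ((n : ℝ) - 1) * (1 - y s₀ ^ 2) / x s₀ ^ 2 := by positivity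
  have hD : -((n : ℝ) - 1) * (1 - y s₀ ^ 2) * y s₀ / x s₀ ^ 2
      = -(((n : ℝ) - 1) * (1 - y s₀ ^ 2) / x s₀ ^ 2 * y s₀) := by ring
  refine ⟨hV₀, hV', ?_, fun hpos => ?_, fun hneg => ?_⟩
  · rw [hD]
    exact neg_ne_zero.mpr (mul_ne_zero hK.ne' hy₀ne)
  · exact isStrictLocalMax_of_hasDerivAt_deriv_neg hy' hV₀ hV'
      (hD ▸ neg_neg_of_pos (mul_pos hK hpos))
  · exact isStrictLocalMin_of_hasDerivAt_deriv_pos hy' hV₀ hV'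
      (hD ▸ neg_pos.mpr (mul_neg_of_pos_of_neg hK hneg))

/-- if an orbit of the phase-space system touches the curve
`x = Γ_ε(y)` at a point with `y₀ ≠ 0`, then `y'(s₀) = 0`, `y` is twice differentiable at
`s₀` with `y''(s₀) = -(n-1)(1-y₀²)y₀/x₀² ≠ 0`, and `s₀` is a strict local maximum of `y`
when `y₀ > 0` and a strict local minimum when `y₀ < 0`. -/
theorem orbit_local_extremum_at_Gamma (n : ℕ) (hn : 2 ≤ n) (ε : ℝ) (hε : ε = 1 ∨ ε = -1)
    (𝔥 : ℝ → ℝ) (U : Set ℝ) (hU : IsOpen U) (hIccU : Set.Icc (-1 : ℝ) 1 ⊆ U)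
    (h𝔥 : ContDiffOn ℝ 1 𝔥 U)
    (I : Set ℝ) (hIopen : IsOpen I) (hIconn : I.OrdConnected)
    (x y V : ℝ → ℝ)
    (hmem : ∀ s ∈ I, 0 < x s ∧ y s ∈ Set.Ioo (-1 : ℝ) 1)
    (hV : ∀ s ∈ I, V s = ((n : ℝ) - 1) * (1 - (y s) ^ 2) / x s
      - (n : ℝ) * ε * 𝔥 (y s) * Real.sqrt (1 - (y s) ^ 2))
    (hx : ∀ s ∈ I, HasDerivAt x (y s) s)
    (hy : ∀ s ∈ I, HasDerivAt y (V s) s)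
    (s₀ : ℝ) (hs₀ : s₀ ∈ I) (x₀ y₀ : ℝ) (hx₀ : x₀ = x s₀) (hy₀ : y₀ = y s₀)
    (hy₀ne : y₀ ≠ 0) (hpos : 0 < ε * 𝔥 y₀)
    (hΓ : x₀ = ((n : ℝ) - 1) * Real.sqrt (1 - y₀ ^ 2) / ((n : ℝ) * ε * 𝔥 y₀)) :
    V s₀ = 0 ∧
    HasDerivAt V (-((n : ℝ) - 1) * (1 - y₀ ^ 2) * y₀ / x₀ ^ 2) s₀ ∧
    -((n : ℝ) - 1) * (1 - y₀ ^ 2) * y₀ / x₀ ^ 2 ≠ 0 ∧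
    (0 < y₀ → ∀ᶠ s in nhdsWithin s₀ {s₀}ᶜ, y s < y s₀) ∧
    (y₀ < 0 → ∀ᶠ s in nhdsWithin s₀ {s₀}ᶜ, y s₀ < y s) :=
  orbit_local_extremum_at_Gamma_general n hn ε 𝔥 U hU hIccU h𝔥 I hIopen x y V hmem hV hx hy s₀ hs₀
    x₀ y₀ hx₀ hy₀ hy₀ne hΓ
end

section
/- Fix an integer n ≥ 2, ε ∈ {−1, 1}, and 𝔥 : ℝ → ℝ of class C¹ on a neighborhood of [−1,1] with 𝔥(−y) = 𝔥(y) for all y ∈ [−1, 1]. Let (x, y) : I → (0,∞) × (−1,1) be a solution of the system x' = y, y' = (n−1)(1−y²)/x − nε𝔥(y)√(1−y²) on an open interval I, and suppose y(s₀) = 0 for some s₀ ∈ I. Then for every t such that both s₀ + t and s₀ − t lie in I, one has x(s₀ + t) = x(s₀ − t) and y(s₀ + t) = −y(s₀ − t). -/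
/-!
Both `s ↦ (x s, y s)` and its reflection `s ↦ (x (2s₀ - s), -y (2s₀ - s))` solve the system,
because for even `𝔥` the vector field anticommutes with `(x, y) ↦ (x, -y)`; they agree at `s₀`
since `y s₀ = 0`. The vector field is `C¹`, hence locally Lipschitz, on the phase space, so
solutions agreeing at one time agree near every time where they agree; on the connected set of
times where both are defined, they therefore agree everywhere.
-/

open Set Filter Topology

section ODEUniqueness

variable {E : Type*} [NormedAddCommGroup E] [NormedSpace ℝ E]

theorem ODE_solution_unique_of_isPreconnected {v : E → E} {K : Set ℝ} {f g : ℝ → E}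
    (hK : IsOpen K) (hKc : IsPreconnected K)
    (hv : ∀ t ∈ K, ∃ L, ∃ u ∈ 𝓝 (f t), LipschitzOnWith L v u)
    (hf : ∀ t ∈ K, HasDerivAt f (v (f t)) t) (hg : ∀ t ∈ K, HasDerivAt g (v (g t)) t)
    {t₀ : ℝ} (ht₀ : t₀ ∈ K) (heq : f t₀ = g t₀) : EqOn f g K := by
  have hlocal : ∀ t ∈ K, f t = g t → f =ᶠ[𝓝 t] g := by
    intro t ht heqt
    obtain ⟨L, u, hu, hLip⟩ := hv t ht
    have hsol : ∀ h : ℝ → E, h t = f t → (∀ t ∈ K, HasDerivAt h (v (h t)) t) →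
        ∀ᶠ τ in 𝓝 t, HasDerivAt h (v (h τ)) τ ∧ h τ ∈ u := fun h hft hh =>
      (hK.eventually_mem ht).mono (fun τ hτ => hh τ hτ) |>.and
        ((hh t ht).continuousAt.preimage_mem_nhds (hft ▸ hu))
    exact ODE_solution_unique_of_eventually (v := fun _ => v) (s := fun _ => u)
      (.of_forall fun _ => hLip) (hsol f rfl hf) (hsol g heqt.symm hg) heqt
  set u := {t | f =ᶠ[𝓝 t] g}
  have hclosure : closure u ∩ K ⊆ u := by
    rintro t ⟨hcl, ht⟩
    refine hlocal t ht ?_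
    have := mem_closure_iff_nhdsWithin_neBot.mp hcl
    refine tendsto_nhds_unique (l := 𝓝[u] t)
      ((hf t ht).continuousAt.mono_left nhdsWithin_le_nhds)
      (((hg t ht).continuousAt.mono_left nhdsWithin_le_nhds).congr' ?_)
    exact eventually_nhdsWithin_of_forall fun τ hτ => hτ.self_of_nhds.symm
  have hopen : IsOpen u := isOpen_iff_mem_nhds.mpr fun _ h => h.eventually_nhds
  exact fun t ht => (hKc.subset_of_closure_inter_subset hopen ⟨t₀, ht₀, hlocal t₀ ht₀ heq⟩
    hclosure ht).self_of_nhds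

theorem HasDerivAt.reflect_of_anticomm {v : E → E} (R : E →L[ℝ] E) {f : ℝ → E} {a s : ℝ}
    (hf : HasDerivAt f (v (f (a - s))) (a - s))
    (hv : v (R (f (a - s))) = -R (v (f (a - s)))) :
    HasDerivAt (fun t => R (f (a - t))) (v (R (f (a - s)))) s := by
  have h := R.hasFDerivAt.comp_hasDerivAt s (hf.scomp s ((hasDerivAt_id s).const_sub a))
  rw [hv]
  simpa only [Function.comp_def, neg_one_smul, map_neg] using h

end ODEUniqueness

noncomputable def phaseField (n : ℕ) (ε : ℝ) (𝔥 : ℝ → ℝ) (q : ℝ × ℝ) : ℝ × ℝ :=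
  (q.2, ((n : ℝ) - 1) * (1 - q.2 ^ 2) / q.1 - (n : ℝ) * ε * 𝔥 q.2 * Real.sqrt (1 - q.2 ^ 2))

def axisReflection : ℝ × ℝ →L[ℝ] ℝ × ℝ :=
  (ContinuousLinearMap.fst ℝ ℝ ℝ).prod (-ContinuousLinearMap.snd ℝ ℝ ℝ)

@[simp]
theorem axisReflection_apply (q : ℝ × ℝ) : axisReflection q = (q.1, -q.2) := rfl

theorem contDiffAt_phaseField (n : ℕ) (ε : ℝ) {𝔥 : ℝ → ℝ} {p : ℝ × ℝ}
    (h𝔥 : ContDiffAt ℝ 1 𝔥 p.2) (hp₁ : p.1 ≠ 0) (hp₂ : 1 - p.2 ^ 2 ≠ 0) :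
    ContDiffAt ℝ 1 (phaseField n ε 𝔥) p := by
  have hsnd : ContDiffAt ℝ 1 (fun q : ℝ × ℝ => q.2) p := contDiffAt_snd
  have hdisc : ContDiffAt ℝ 1 (fun q : ℝ × ℝ => 1 - q.2 ^ 2) p := contDiffAt_const.sub (hsnd.pow 2)
  exact hsnd.prodMk (((contDiffAt_const.mul hdisc).div contDiffAt_fst hp₁).sub
    ((contDiffAt_const.mul (h𝔥.comp p hsnd)).mul ((Real.contDiffAt_sqrt hp₂).comp p hdisc)))

theorem phaseField_axisReflection (n : ℕ) (ε : ℝ) {𝔥 : ℝ → ℝ} {q : ℝ × ℝ}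
    (heven : 𝔥 (-q.2) = 𝔥 q.2) :
    phaseField n ε 𝔥 (axisReflection q) = -axisReflection (phaseField n ε 𝔥 q) := by
  simp [phaseField, heven]

theorem orbit_symmetric_across_axis_general (n : ℕ) (ε : ℝ)
    (𝔥 : ℝ → ℝ) (U : Set ℝ) (hU : IsOpen U) (hIccU : Set.Icc (-1 : ℝ) 1 ⊆ U)
    (h𝔥 : ContDiffOn ℝ 1 𝔥 U) (heven : ∀ y ∈ Set.Icc (-1 : ℝ) 1, 𝔥 (-y) = 𝔥 y)
    (I : Set ℝ) (hIopen : IsOpen I) (hIconn : I.OrdConnected)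
    (x y : ℝ → ℝ)
    (hmem : ∀ s ∈ I, 0 < x s ∧ y s ∈ Set.Ioo (-1 : ℝ) 1)
    (hx : ∀ s ∈ I, HasDerivAt x (y s) s)
    (hy : ∀ s ∈ I, HasDerivAt y
      (((n : ℝ) - 1) * (1 - (y s) ^ 2) / x s
        - (n : ℝ) * ε * 𝔥 (y s) * Real.sqrt (1 - (y s) ^ 2)) s)
    (s₀ : ℝ) (hs₀ : s₀ ∈ I) (hy₀ : y s₀ = 0) :
    ∀ t : ℝ, s₀ + t ∈ I → s₀ - t ∈ I →
      x (s₀ + t) = x (s₀ - t) ∧ y (s₀ + t) = -y (s₀ - t) := by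
  intro t htPlus htMinus
  set K := I ∩ (fun s => 2 * s₀ - s) ⁻¹' I
  have hKopen : IsOpen K := hIopen.inter (hIopen.preimage (by fun_prop))
  have hKconn : IsPreconnected K :=
    (hIconn.inter (hIconn.preimage_anti fun _ _ h => sub_le_sub_left h _)).isPreconnected
  set F : ℝ → ℝ × ℝ := fun s => (x s, y s)
  have hF : ∀ s ∈ I, HasDerivAt F (phaseField n ε 𝔥 (F s)) s := fun s hs =>
    (hx s hs).prodMk (hy s hs)
  have hG : ∀ s ∈ K, HasDerivAt (fun s => axisReflection (F (2 * s₀ - s)))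
      (phaseField n ε 𝔥 (axisReflection (F (2 * s₀ - s)))) s := by
    intro s hs
    obtain ⟨-, hy₁⟩ := hmem _ hs.2
    exact (hF _ hs.2).reflect_of_anticomm _
      (phaseField_axisReflection n ε (heven _ ⟨hy₁.1.le, hy₁.2.le⟩))
  have hLip : ∀ s ∈ K, ∃ L, ∃ u ∈ 𝓝 (F s), LipschitzOnWith L (phaseField n ε 𝔥) u := by
    intro s hs
    obtain ⟨hx₁, hy₁⟩ := hmem s hs.1
    refine (contDiffAt_phaseField n ε ?_ hx₁.ne' ?_).exists_lipschitzOnWith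
    · exact h𝔥.contDiffAt (hU.mem_nhds (hIccU ⟨hy₁.1.le, hy₁.2.le⟩))
    · nlinarith [hy₁.1, hy₁.2]
  have hs₀K : s₀ ∈ K := ⟨hs₀, by simpa [two_mul] using hs₀⟩
  have htK : s₀ + t ∈ K := ⟨htPlus, by simpa [two_mul, add_sub_add_left_eq_sub] using htMinus⟩
  have hsym := ODE_solution_unique_of_isPreconnected hKopen hKconn hLip
    (fun s hs => hF s hs.1) hG hs₀K (by simp [F, two_mul, hy₀]) htK
  simpa [F, show 2 * s₀ - (s₀ + t) = s₀ - t by ring] using hsym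

/-- if `𝔥` is C¹ near `[-1,1]` and even, then any orbit of the phase-space
system crossing the axis `{y = 0}` at `s₀` is symmetric with respect to that axis:
`x(s₀ + t) = x(s₀ - t)` and `y(s₀ + t) = -y(s₀ - t)` whenever both parameters belong to
the interval of definition. -/
theorem orbit_symmetric_across_axis (n : ℕ) (hn : 2 ≤ n) (ε : ℝ) (hε : ε = 1 ∨ ε = -1)
    (𝔥 : ℝ → ℝ) (U : Set ℝ) (hU : IsOpen U) (hIccU : Set.Icc (-1 : ℝ) 1 ⊆ U)
    (h𝔥 : ContDiffOn ℝ 1 𝔥 U) (heven : ∀ y ∈ Set.Icc (-1 : ℝ) 1, 𝔥 (-y) = 𝔥 y)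
    (I : Set ℝ) (hIopen : IsOpen I) (hIconn : I.OrdConnected)
    (x y : ℝ → ℝ)
    (hmem : ∀ s ∈ I, 0 < x s ∧ y s ∈ Set.Ioo (-1 : ℝ) 1)
    (hx : ∀ s ∈ I, HasDerivAt x (y s) s)
    (hy : ∀ s ∈ I, HasDerivAt y
      (((n : ℝ) - 1) * (1 - (y s) ^ 2) / x s
        - (n : ℝ) * ε * 𝔥 (y s) * Real.sqrt (1 - (y s) ^ 2)) s)
    (s₀ : ℝ) (hs₀ : s₀ ∈ I) (hy₀ : y s₀ = 0) :
    ∀ t : ℝ, s₀ + t ∈ I → s₀ - t ∈ I →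
      x (s₀ + t) = x (s₀ - t) ∧ y (s₀ + t) = -y (s₀ - t) :=
  orbit_symmetric_across_axis_general n ε 𝔥 U hU hIccU h𝔥 heven I hIopen hIconn x y hmem hx hy s₀
    hs₀ hy₀
end

section
/- Fix an integer n ≥ 2, ε ∈ {−1, 1}, and a continuously differentiable function 𝔥 : ℝ → ℝ with 𝔥(1) = 0 and 𝔥(−1) = 0. Define g : ℝ → ℝ by g(y) = 𝔥(y)√(1−y²) for |y| ≤ 1 and g(y) = 0 for |y| > 1. Let (x, y) : I → ℝ² be differentiable on an open interval I with x(s) > 0 for all s ∈ I, satisfying x'(s) = y(s) and y'(s) = (n−1)(1−y(s)²)/x(s) − n ε g(y(s)) for all s ∈ I. If y(s₀) = 1 for some s₀ ∈ I, then y(s) = 1 and x(s) = x(s₀) + s − s₀ for all s ∈ I. -/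
/-!
Along the solution, `u = y - 1` satisfies `|u'| ≤ K |u|` on every compact subinterval: the
term `(n-1)(1-y²)/x` carries the factor `1 - y = -u` and `x` stays away from `0`, while `g`
vanishes to first order at `1` because `𝔥` is `C¹` with `𝔥(1) = 0` and `0 ≤ √(1-y²) ≤ 1`.
Grönwall's inequality then forces `u ≡ 0` from `u(s₀) = 0`, and `x' = y = 1` makes `x` affine.
-/

open Set

section Gronwall

variable {E : Type*} [NormedAddCommGroup E] [NormedSpace ℝ E] {f f' : ℝ → E} {K a b : ℝ}

theorem eq_zero_of_norm_deriv_le_mul_norm_self_Icc (hab : a ≤ b)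
    (hf : ∀ t ∈ Icc a b, HasDerivAt f (f' t) t) (ha : f a = 0)
    (bound : ∀ t ∈ Icc a b, ‖f' t‖ ≤ K * ‖f t‖) : f b = 0 :=
  eq_zero_of_abs_deriv_le_mul_abs_self_of_eq_zero_right
    (fun t ht => (hf t ht).continuousAt.continuousWithinAt)
    (fun t ht => (hf t (Ico_subset_Icc_self ht)).hasDerivWithinAt) ha
    (fun t ht => bound t (Ico_subset_Icc_self ht)) b (right_mem_Icc.mpr hab)

theorem eq_zero_of_norm_deriv_le_mul_norm_self_uIcc
    (hf : ∀ t ∈ uIcc a b, HasDerivAt f (f' t) t) (ha : f a = 0)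
    (bound : ∀ t ∈ uIcc a b, ‖f' t‖ ≤ K * ‖f t‖) : f b = 0 := by
  rcases le_total a b with hab | hba
  · rw [uIcc_of_le hab] at hf bound
    exact eq_zero_of_norm_deriv_le_mul_norm_self_Icc hab hf ha bound
  · rw [uIcc_of_ge hba] at hf bound
    have hneg : ∀ t ∈ Icc (-a) (-b), -t ∈ Icc b a := fun t ht => ⟨le_neg.mp ht.2, neg_le.mp ht.1⟩
    simpa using eq_zero_of_norm_deriv_le_mul_norm_self_Icc (f := fun t => f (-t))
      (f' := fun t => -f' (-t)) (neg_le_neg hba)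
      (fun t ht => by
        simpa [Function.comp_def] using (hf _ (hneg t ht)).scomp t (hasDerivAt_neg t))
      (by simpa using ha) (fun t ht => by simpa using bound _ (hneg t ht))

end Gronwall

theorem eq_add_sub_of_hasDerivAt_one {x : ℝ → ℝ} {I : Set ℝ} (hI : I.OrdConnected)
    (hx : ∀ s ∈ I, HasDerivAt x 1 s) {s₀ s : ℝ} (hs₀ : s₀ ∈ I) (hs : s ∈ I) :
    x s = x s₀ + s - s₀ := by
  have h := hI.convex.norm_image_sub_le_of_norm_hasDerivWithin_le (f := fun t => x t - t)
    (f' := fun _ => 0) (C := 0)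
    (fun t ht => by
      simpa only [sub_self] using ((hx t ht).fun_sub (hasDerivAt_id' t)).hasDerivWithinAt)
    (fun _ _ => by simp) hs₀ hs
  rw [zero_mul, norm_le_zero_iff] at h
  linarith

theorem exists_abs_le_mul_abs_sub_one {𝔥 g : ℝ → ℝ} (h𝔥 : ContDiff ℝ 1 𝔥) (h1 : 𝔥 1 = 0)
    (hg : ∀ y : ℝ, g y = if |y| ≤ 1 then 𝔥 y * Real.sqrt (1 - y ^ 2) else 0) :
    ∃ L, ∀ w, |g w| ≤ L * |w - 1| := by
  obtain ⟨L, hL⟩ := h𝔥.contDiffOn.exists_lipschitzOnWith one_ne_zero (convex_Icc (-1 : ℝ) 1)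
    isCompact_Icc
  refine ⟨L, fun w => ?_⟩
  rw [hg]
  split_ifs with hw
  · have hsqrt : Real.sqrt (1 - w ^ 2) ≤ 1 := Real.sqrt_le_one.mpr (by nlinarith [sq_nonneg w])
    have hlip : |𝔥 w - 𝔥 1| ≤ L * |w - 1| := by
      simpa only [Real.dist_eq] using hL.dist_le_mul w (abs_le.mp hw) 1 (by norm_num)
    calc |𝔥 w * Real.sqrt (1 - w ^ 2)| = |𝔥 w - 𝔥 1| * Real.sqrt (1 - w ^ 2) := by
          rw [h1, sub_zero, abs_mul, abs_of_nonneg (Real.sqrt_nonneg _)]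
      _ ≤ |𝔥 w - 𝔥 1| * 1 := by gcongr
      _ ≤ L * |w - 1| := (mul_one _).trans_le hlip
  · rw [abs_zero]
    positivity

theorem abs_div_sub_mul_le_mul_abs_sub_one {c d X Y m M L gY : ℝ} (hm : 0 < m) (hX : m ≤ X)
    (hY : |Y| ≤ M) (hgY : |gY| ≤ L * |Y - 1|) :
    |c * (1 - Y ^ 2) / X - d * gY| ≤ (|c| * (M + 1) / m + |d| * L) * |Y - 1| := by
  have hY1 : |1 - Y ^ 2| ≤ (M + 1) * |Y - 1| := by
    rw [show 1 - Y ^ 2 = -((Y + 1) * (Y - 1)) by ring, abs_neg, abs_mul]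
    gcongr
    exact (abs_add_le Y 1).trans (by rw [abs_one]; linarith)
  have hfirst : |c * (1 - Y ^ 2) / X| ≤ |c| * (M + 1) / m * |Y - 1| := by
    rw [abs_div, abs_mul, abs_of_pos (hm.trans_le hX), div_le_iff₀ (hm.trans_le hX)]
    calc |c| * |1 - Y ^ 2| ≤ |c| * ((M + 1) * |Y - 1|) := by gcongr
      _ = |c| * (M + 1) / m * |Y - 1| * m := by field_simp
      _ ≤ |c| * (M + 1) / m * |Y - 1| * X := by
        have : 0 ≤ M + 1 := by linarith [abs_nonneg Y]
        gcongr
  calc |c * (1 - Y ^ 2) / X - d * gY| ≤ |c * (1 - Y ^ 2) / X| + |d| * |gY| := by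
        rw [← abs_mul]; exact abs_sub _ _
    _ ≤ |c| * (M + 1) / m * |Y - 1| + |d| * (L * |Y - 1|) := by gcongr
    _ = (|c| * (M + 1) / m + |d| * L) * |Y - 1| := by ring

theorem orbit_attaining_y_one_is_line_general (n : ℕ) (ε : ℝ)
    (𝔥 : ℝ → ℝ) (h𝔥 : ContDiff ℝ 1 𝔥) (h1 : 𝔥 1 = 0)
    (g : ℝ → ℝ)
    (hg : ∀ y : ℝ, g y = if |y| ≤ 1 then 𝔥 y * Real.sqrt (1 - y ^ 2) else 0)
    (I : Set ℝ) (hIconn : I.OrdConnected)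
    (x y : ℝ → ℝ) (hpos : ∀ s ∈ I, 0 < x s)
    (hx : ∀ s ∈ I, HasDerivAt x (y s) s)
    (hy : ∀ s ∈ I, HasDerivAt y
      (((n : ℝ) - 1) * (1 - (y s) ^ 2) / x s - (n : ℝ) * ε * g (y s)) s)
    (s₀ : ℝ) (hs₀ : s₀ ∈ I) (hys₀ : y s₀ = 1) :
    ∀ s ∈ I, y s = 1 ∧ x s = x s₀ + s - s₀ := by
  obtain ⟨L, hL⟩ := exists_abs_le_mul_abs_sub_one h𝔥 h1 hg
  have hy_one : ∀ s ∈ I, y s = 1 := by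
    intro s hs
    have hJ : uIcc s₀ s ⊆ I := hIconn.uIcc_subset hs₀ hs
    obtain ⟨smin, hsmin, hxmin⟩ := isCompact_uIcc.exists_isMinOn nonempty_uIcc
      fun t ht => (hx t (hJ ht)).continuousAt.continuousWithinAt
    obtain ⟨M, hM⟩ := isCompact_uIcc.exists_bound_of_continuousOn
      fun t ht => (hy t (hJ ht)).continuousAt.continuousWithinAt
    refine sub_eq_zero.mp <| eq_zero_of_norm_deriv_le_mul_norm_self_uIcc (f := fun t => y t - 1)
      (fun t ht => (hy t (hJ ht)).sub_const 1) (by simp [hys₀]) fun t ht =>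
        abs_div_sub_mul_le_mul_abs_sub_one (hpos smin (hJ hsmin)) (hxmin ht) (hM t ht) (hL _)
  exact fun s hs => ⟨hy_one s hs,
    eq_add_sub_of_hasDerivAt_one hIconn (fun t ht => hy_one t ht ▸ hx t ht) hs₀ hs⟩

/-- when `𝔥` is C¹ with `𝔥(±1) = 0` and the term `𝔥(y)√(1-y²)` is extended
by `0` for `|y| > 1`, any solution of the (extended) phase-space system attaining `y = 1`
at some parameter `s₀` satisfies `y ≡ 1` and `x(s) = x(s₀) + s - s₀` on its whole interval
of definition. -/
theorem orbit_attaining_y_one_is_line (n : ℕ) (hn : 2 ≤ n) (ε : ℝ) (hε : ε = 1 ∨ ε = -1)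
    (𝔥 : ℝ → ℝ) (h𝔥 : ContDiff ℝ 1 𝔥) (h1 : 𝔥 1 = 0) (hm1 : 𝔥 (-1) = 0)
    (g : ℝ → ℝ)
    (hg : ∀ y : ℝ, g y = if |y| ≤ 1 then 𝔥 y * Real.sqrt (1 - y ^ 2) else 0)
    (I : Set ℝ) (hIopen : IsOpen I) (hIconn : I.OrdConnected)
    (x y : ℝ → ℝ) (hpos : ∀ s ∈ I, 0 < x s)
    (hx : ∀ s ∈ I, HasDerivAt x (y s) s)
    (hy : ∀ s ∈ I, HasDerivAt y
      (((n : ℝ) - 1) * (1 - (y s) ^ 2) / x s - (n : ℝ) * ε * g (y s)) s)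
    (s₀ : ℝ) (hs₀ : s₀ ∈ I) (hys₀ : y s₀ = 1) :
    ∀ s ∈ I, y s = 1 ∧ x s = x s₀ + s - s₀ :=
  orbit_attaining_y_one_is_line_general n ε 𝔥 h𝔥 h1 g hg I hIconn x y hpos hx hy s₀ hs₀ hys₀
end

section
/- Fix an integer n ≥ 2 and 𝔥 : ℝ → ℝ with 𝔥(y) ≤ 0 for all y ∈ [−1, 1]. Then every solution (x, y) : I → (0,∞) × (−1,1) of the system x' = y, y' = (n−1)(1−y²)/x − n𝔥(y)√(1−y²) (the case ε = 1) satisfies y'(s) > 0 for all s ∈ I; in particular y is strictly increasing on I. -/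
open Set

lemma Set.OrdConnected.strictMonoOn_of_hasDerivAt_pos {D : Set ℝ} (hD : D.OrdConnected)
    {f f' : ℝ → ℝ} (hf : ∀ s ∈ D, HasDerivAt f (f' s) s) (hf' : ∀ s ∈ D, 0 < f' s) :
    StrictMonoOn f D :=
  strictMonoOn_of_deriv_pos hD.convex (fun s hs ↦ (hf s hs).continuousAt.continuousWithinAt)
    fun s hs ↦ (hf s (interior_subset hs)).deriv ▸ hf' s (interior_subset hs)

lemma rotational_profile_rhs_pos {n x y h : ℝ} (hn : 1 < n) (hx : 0 < x)
    (hy : y ∈ Ioo (-1 : ℝ) 1) (hh : h ≤ 0) :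
    0 < (n - 1) * (1 - y ^ 2) / x - n * h * Real.sqrt (1 - y ^ 2) := by
  have hy2 : 0 < 1 - y ^ 2 := by
    rw [sub_pos, sq_lt_one_iff_abs_lt_one, abs_lt]
    exact hy
  have hcurv : 0 < (n - 1) * (1 - y ^ 2) / x := by
    have := sub_pos.mpr hn
    positivity
  have hforce : n * h * Real.sqrt (1 - y ^ 2) ≤ 0 :=
    mul_nonpos_of_nonpos_of_nonneg (mul_nonpos_of_nonneg_of_nonpos (by linarith) hh)
      (Real.sqrt_nonneg _)
  linarith

theorem y_strictly_increasing_of_nonpos_h_general (n : ℕ) (hn : 2 ≤ n)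
    (𝔥 : ℝ → ℝ) (h𝔥 : ∀ y ∈ Set.Icc (-1 : ℝ) 1, 𝔥 y ≤ 0)
    (I : Set ℝ) (hIconn : I.OrdConnected)
    (x y : ℝ → ℝ)
    (hmem : ∀ s ∈ I, 0 < x s ∧ y s ∈ Set.Ioo (-1 : ℝ) 1)
    (hy : ∀ s ∈ I, HasDerivAt y
      (((n : ℝ) - 1) * (1 - (y s) ^ 2) / x s
        - (n : ℝ) * 𝔥 (y s) * Real.sqrt (1 - (y s) ^ 2)) s) :
    (∀ s ∈ I, 0 < ((n : ℝ) - 1) * (1 - (y s) ^ 2) / x s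
      - (n : ℝ) * 𝔥 (y s) * Real.sqrt (1 - (y s) ^ 2)) ∧
    StrictMonoOn y I := by
  have hn1 : (1 : ℝ) < n := by exact_mod_cast hn
  have hpos : ∀ s ∈ I, 0 < ((n : ℝ) - 1) * (1 - (y s) ^ 2) / x s
      - (n : ℝ) * 𝔥 (y s) * Real.sqrt (1 - (y s) ^ 2) := fun s hs ↦
    rotational_profile_rhs_pos hn1 (hmem s hs).1 (hmem s hs).2
      (h𝔥 _ (Ioo_subset_Icc_self (hmem s hs).2))
  exact ⟨hpos, hIconn.strictMonoOn_of_hasDerivAt_pos hy hpos⟩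

/-- if `𝔥 ≤ 0` on `[-1,1]`, then along every solution of the phase-space
system with `ε = 1` one has `y' > 0`; in particular `y` is strictly increasing. -/
theorem y_strictly_increasing_of_nonpos_h (n : ℕ) (hn : 2 ≤ n)
    (𝔥 : ℝ → ℝ) (h𝔥 : ∀ y ∈ Set.Icc (-1 : ℝ) 1, 𝔥 y ≤ 0)
    (I : Set ℝ) (hIconn : I.OrdConnected)
    (x y : ℝ → ℝ)
    (hmem : ∀ s ∈ I, 0 < x s ∧ y s ∈ Set.Ioo (-1 : ℝ) 1)
    (hx : ∀ s ∈ I, HasDerivAt x (y s) s)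
    (hy : ∀ s ∈ I, HasDerivAt y
      (((n : ℝ) - 1) * (1 - (y s) ^ 2) / x s
        - (n : ℝ) * 𝔥 (y s) * Real.sqrt (1 - (y s) ^ 2)) s) :
    (∀ s ∈ I, 0 < ((n : ℝ) - 1) * (1 - (y s) ^ 2) / x s
      - (n : ℝ) * 𝔥 (y s) * Real.sqrt (1 - (y s) ^ 2)) ∧
    StrictMonoOn y I :=
  y_strictly_increasing_of_nonpos_h_general n hn 𝔥 h𝔥 I hIconn x y hmem hy
end

section
/- Fix an integer n ≥ 2 and 𝔥 : ℝ → ℝ of class C¹ on a neighborhood of [−1,1]. Let 0 ≤ y₀ < 1 with 𝔥(y₀) = 0 and 𝔥(y) > 0 for all y ∈ (y₀, 1]. For y ∈ (y₀, 1) set Γ(y) = (n−1)√(1−y²)/(n𝔥(y)). Let (x, y) : I → (0,∞) × (−1,1) be a solution on an interval I of the system x' = y, y' = (n−1)(1−y²)/x − n𝔥(y)√(1−y²) (the case ε = 1), and suppose that for some s₀ ∈ I one has y₀ < y(s₀) < 1 and x(s₀) > Γ(y(s₀)). Then for every s ∈ I with s ≥ s₀: y₀ < y(s) < 1, x(s)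 > Γ(y(s)), y'(s) < 0, and x'(s) > 0. -/
open Set Filter Topology

/-!
Write `G = n𝔥(y) · (x − Γ(y)) = x · n𝔥(y) − (n−1)√(1−y²)`, which makes sense also where
`𝔥` vanishes. Inside the strip `y' = −(√(1−y²)/x) · G`, and where `𝔥(y) > 0` the condition
`x > Γ(y)` reads `G > 0`. The orbit can leave `Λ⁺` only through a first
time `t` at which `G(t) = 0`: it cannot reach `y = y₀` earlier, since `𝔥(y₀) = 0` forces
`G < 0` there. At such a `t` we have `y'(t) = 0`, hence `G'(t) = x'(t) · n𝔥(y(t)) = y · n𝔥(y) > 0`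
because `y > y₀ ≥ 0`; but `G` decreases to `0` from above just before `t`.
-/

lemma exists_first_zero_of_continuousOn {f : ℝ → ℝ} {a b : ℝ} (hab : a ≤ b)
    (hf : ContinuousOn f (Icc a b)) (ha : 0 < f a) (hb : f b ≤ 0) :
    ∃ t ∈ Ioc a b, f t = 0 ∧ ∀ u ∈ Ico a t, 0 < f u := by
  set S := Icc a b ∩ f ⁻¹' Iic 0
  have hS : IsClosed S := hf.preimage_isClosed_of_isClosed isClosed_Icc isClosed_Iic
  have hSbdd : BddBelow S := ⟨a, fun u hu => hu.1.1⟩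
  set t := sInf S
  obtain ⟨⟨hat, htb⟩, hft⟩ : t ∈ S := hS.csInf_mem ⟨b, ⟨hab, le_rfl⟩, hb⟩ hSbdd
  have hpos : ∀ u ∈ Ico a t, 0 < f u := fun u hu => by
    by_contra! hfu
    exact (csInf_le hSbdd ⟨⟨hu.1, hu.2.le.trans htb⟩, hfu⟩).not_gt hu.2
  have hat' : a < t := hat.lt_of_ne fun hta => (ha.trans_le (hta ▸ hft)).false
  refine ⟨t, ⟨hat', htb⟩, le_antisymm hft ?_, hpos⟩
  by_contra! hneg
  obtain ⟨u, hu, hfu⟩ := intermediate_value_Icc' hat (hf.mono (Icc_subset_Icc_right htb))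
    ⟨hneg.le, ha.le⟩
  exact (hpos u ⟨hu.1, hu.2.lt_of_ne (by rintro rfl; exact hneg.ne hfu)⟩).ne' hfu

lemma HasDerivAt.eventually_neg_nhdsLT {g : ℝ → ℝ} {d t : ℝ} (hg : HasDerivAt g d t)
    (hd : 0 < d) (hgt : g t = 0) : ∀ᶠ u in 𝓝[<] t, g u < 0 := by
  filter_upwards [nhdsWithin_le_nhds
    (eventually_nhdsWithin_sign_eq_of_deriv_pos (hg.deriv ▸ hd) hgt), self_mem_nhdsWithin]
    with u hsign hu
  rwa [sign_neg (sub_neg.mpr hu), sign_eq_neg_one_iff] at hsign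

noncomputable def bowlField (n : ℝ) (𝔥 : ℝ → ℝ) (x y : ℝ) : ℝ :=
  (n - 1) * (1 - y ^ 2) / x - n * 𝔥 y * √(1 - y ^ 2)

noncomputable def gammaGap (n : ℝ) (𝔥 : ℝ → ℝ) (x y : ℝ) : ℝ :=
  x * (n * 𝔥 y) - (n - 1) * √(1 - y ^ 2)

section Pointwise

variable {n : ℝ} {𝔥 : ℝ → ℝ} {x y : ℝ}

lemma bowlField_eq_neg_mul_gammaGap (hx : x ≠ 0) (hy : 0 ≤ 1 - y ^ 2) :
    bowlField n 𝔥 x y = -(√(1 - y ^ 2) / x) * gammaGap n 𝔥 x y := by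
  have hsq : √(1 - y ^ 2) ^ 2 = 1 - y ^ 2 := Real.sq_sqrt hy
  unfold bowlField gammaGap
  field_simp
  linear_combination (1 - n) * hsq

lemma one_sub_sq_pos (hy : y ∈ Ioo (-1 : ℝ) 1) : 0 < 1 - y ^ 2 := by
  nlinarith [hy.1, hy.2]

lemma bowlField_neg (hx : 0 < x) (hy : y ∈ Ioo (-1 : ℝ) 1) (hG : 0 < gammaGap n 𝔥 x y) :
    bowlField n 𝔥 x y < 0 := by
  rw [bowlField_eq_neg_mul_gammaGap hx.ne' (one_sub_sq_pos hy).le, neg_mul, neg_neg_iff_pos]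
  have hroot := Real.sqrt_pos.mpr (one_sub_sq_pos hy)
  positivity

lemma bowlField_eq_zero (hx : x ≠ 0) (hy : 0 ≤ 1 - y ^ 2) (hG : gammaGap n 𝔥 x y = 0) :
    bowlField n 𝔥 x y = 0 := by
  rw [bowlField_eq_neg_mul_gammaGap hx hy, hG, mul_zero]

lemma gammaGap_neg_of_eq_zero (hn : 1 < n) (hy : y ∈ Ioo (-1 : ℝ) 1) (h𝔥 : 𝔥 y = 0) :
    gammaGap n 𝔥 x y < 0 := by
  have hroot := Real.sqrt_pos.mpr (one_sub_sq_pos hy)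
  simp only [gammaGap, h𝔥, mul_zero, zero_sub, neg_neg_iff_pos]
  exact mul_pos (by linarith) hroot

lemma div_lt_iff_gammaGap_pos (hn : 0 < n) (h𝔥 : 0 < 𝔥 y) :
    (n - 1) * √(1 - y ^ 2) / (n * 𝔥 y) < x ↔ 0 < gammaGap n 𝔥 x y := by
  rw [div_lt_iff₀ (mul_pos hn h𝔥), gammaGap, sub_pos]

end Pointwise

lemma hasDerivAt_gammaGap_of_hasDerivAt_zero {n : ℝ} {𝔥 x y : ℝ → ℝ} {x' t : ℝ}
    (hx : HasDerivAt x x' t) (hy : HasDerivAt y 0 t) (h𝔥 : DifferentiableAt ℝ 𝔥 (y t))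
    (hyt : y t ∈ Ioo (-1 : ℝ) 1) :
    HasDerivAt (fun s => gammaGap n 𝔥 (x s) (y s)) (x' * (n * 𝔥 (y t))) t := by
  have hroot : HasDerivAt (fun s => √(1 - y s ^ 2)) 0 t := by
    simpa using ((hasDerivAt_const t 1).sub (hy.pow 2)).sqrt (one_sub_sq_pos hyt).ne'
  have hh : HasDerivAt (fun s => 𝔥 (y s)) 0 t := by
    simpa [Function.comp_def] using h𝔥.hasDerivAt.comp t hy
  simpa [gammaGap] using (hx.fun_mul (hh.const_mul n)).fun_sub (hroot.const_mul (n - 1))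

lemma continuousOn_gammaGap {n : ℝ} {𝔥 x y : ℝ → ℝ} {I : Set ℝ}
    (hx : ∀ s ∈ I, ContinuousAt x s) (hy : ∀ s ∈ I, ContinuousAt y s)
    (h𝔥 : ∀ s ∈ I, ContinuousAt 𝔥 (y s)) :
    ContinuousOn (fun s => gammaGap n 𝔥 (x s) (y s)) I := fun s hs =>
  ((hx s hs).mul (continuousAt_const.mul ((h𝔥 s hs).comp (hy s hs)))).sub
    (continuousAt_const.mul (Real.continuous_sqrt.continuousAt.comp
      (continuousAt_const.sub ((hy s hs).pow 2)))) |>.continuousWithinAt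

lemma lt_of_forall_gammaGap_nonneg {n y₀ a b : ℝ} {𝔥 x y : ℝ → ℝ} (hn : 1 < n)
    (hy₀ : 𝔥 y₀ = 0) (hmem : ∀ s ∈ Icc a b, y s ∈ Ioo (-1 : ℝ) 1)
    (hy : ContinuousOn y (Icc a b)) (ha : y₀ < y a)
    (hG : ∀ s ∈ Icc a b, 0 ≤ gammaGap n 𝔥 (x s) (y s)) :
    ∀ s ∈ Icc a b, y₀ < y s := by
  intro s hs
  by_contra! hys
  obtain ⟨t, ⟨hat, hts⟩, hyt, -⟩ := exists_first_zero_of_continuousOn (f := fun u => y u - y₀)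
    hs.1 ((hy.mono (Icc_subset_Icc_right hs.2)).sub continuousOn_const) (sub_pos.2 ha)
    (sub_nonpos.2 hys)
  have htab : t ∈ Icc a b := ⟨hat.le, hts.trans hs.2⟩
  have h𝔥t : 𝔥 (y t) = 0 := sub_eq_zero.1 hyt ▸ hy₀
  exact (gammaGap_neg_of_eq_zero hn (hmem t htab) h𝔥t).not_ge (hG t htab)

lemma gammaGap_pos_of_le {n y₀ s₀ : ℝ} {𝔥 x y : ℝ → ℝ} {I : Set ℝ} (hn : 1 < n)
    (hI : I.OrdConnected) (hmem : ∀ s ∈ I, 0 < x s ∧ y s ∈ Ioo (-1 : ℝ) 1)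
    (hx : ∀ s ∈ I, HasDerivAt x (y s) s)
    (hy : ∀ s ∈ I, HasDerivAt y (bowlField n 𝔥 (x s) (y s)) s)
    (h𝔥 : ∀ z ∈ Ioo (-1 : ℝ) 1, DifferentiableAt ℝ 𝔥 z)
    (hy₀0 : 0 ≤ y₀) (hy₀ : 𝔥 y₀ = 0) (hpos : ∀ z ∈ Ioo y₀ 1, 0 < 𝔥 z)
    (hs₀ : s₀ ∈ I) (hy₀s₀ : y₀ < y s₀) (hGs₀ : 0 < gammaGap n 𝔥 (x s₀) (y s₀)) :
    ∀ s ∈ I, s₀ ≤ s → 0 < gammaGap n 𝔥 (x s) (y s) := by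
  intro s hs hs₀s
  by_contra! hGs
  have hK : Icc s₀ s ⊆ I := hI.out hs₀ hs
  have hGc : ContinuousOn (fun s => gammaGap n 𝔥 (x s) (y s)) I :=
    continuousOn_gammaGap (fun s hs => (hx s hs).continuousAt)
      (fun s hs => (hy s hs).continuousAt) (fun s hs => (h𝔥 _ (hmem s hs).2).continuousAt)
  obtain ⟨t, ⟨hs₀t, hts⟩, hGt, hGpos⟩ :=
    exists_first_zero_of_continuousOn hs₀s (hGc.mono hK) hGs₀ hGs
  have htI : t ∈ I := hK ⟨hs₀t.le, hts⟩
  obtain ⟨hxt, hyt⟩ := hmem t htI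
  have hKt : Icc s₀ t ⊆ I := (Icc_subset_Icc_right hts).trans hK
  have hy₀t : y₀ < y t := by
    refine lt_of_forall_gammaGap_nonneg (x := x) hn hy₀ (fun u hu => (hmem u (hKt hu)).2)
      (fun u hu => (hy u (hKt hu)).continuousAt.continuousWithinAt) hy₀s₀ (fun u hu => ?_)
      t ⟨hs₀t.le, le_rfl⟩
    rcases hu.2.eq_or_lt with rfl | hut
    · exact hGt.ge
    · exact (hGpos u ⟨hu.1, hut⟩).le
  have hy't : HasDerivAt y 0 t :=
    bowlField_eq_zero hxt.ne' (one_sub_sq_pos hyt).le hGt ▸ hy t htI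
  have hG't := hasDerivAt_gammaGap_of_hasDerivAt_zero (n := n) (hx t htI) hy't (h𝔥 _ hyt) hyt
  have hslope : 0 < y t * (n * 𝔥 (y t)) :=
    mul_pos (hy₀0.trans_lt hy₀t) (mul_pos (by linarith) (hpos _ ⟨hy₀t, hyt.2⟩))
  obtain ⟨u, hGu, hu⟩ :=
    ((hG't.eventually_neg_nhdsLT hslope hGt).and (Ioo_mem_nhdsLT hs₀t)).exists
  exact (hGpos u ⟨hu.1.le, hu.2⟩).not_gt hGu

theorem bowl_region_invariant_general (n : ℕ) (hn : 2 ≤ n)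
    (𝔥 : ℝ → ℝ) (U : Set ℝ) (hU : IsOpen U) (hIccU : Set.Icc (-1 : ℝ) 1 ⊆ U)
    (h𝔥 : ContDiffOn ℝ 1 𝔥 U)
    (y₀ : ℝ) (hy₀0 : 0 ≤ y₀) (hy₀ : 𝔥 y₀ = 0)
    (hpos : ∀ y ∈ Set.Ioc y₀ 1, 0 < 𝔥 y)
    (Γ : ℝ → ℝ)
    (hΓ : ∀ y ∈ Set.Ioo y₀ 1, Γ y = ((n : ℝ) - 1) * Real.sqrt (1 - y ^ 2) / ((n : ℝ) * 𝔥 y))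
    (I : Set ℝ) (hIconn : I.OrdConnected)
    (x y : ℝ → ℝ)
    (hmem : ∀ s ∈ I, 0 < x s ∧ y s ∈ Set.Ioo (-1 : ℝ) 1)
    (hx : ∀ s ∈ I, HasDerivAt x (y s) s)
    (hy : ∀ s ∈ I, HasDerivAt y
      (((n : ℝ) - 1) * (1 - (y s) ^ 2) / x s
        - (n : ℝ) * 𝔥 (y s) * Real.sqrt (1 - (y s) ^ 2)) s)
    (s₀ : ℝ) (hs₀ : s₀ ∈ I) (h₁ : y₀ < y s₀) (h₂ : y s₀ < 1) (h₃ : Γ (y s₀) < x s₀) :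
    ∀ s ∈ I, s₀ ≤ s →
      y₀ < y s ∧ y s < 1 ∧ Γ (y s) < x s ∧
      (((n : ℝ) - 1) * (1 - (y s) ^ 2) / x s
        - (n : ℝ) * 𝔥 (y s) * Real.sqrt (1 - (y s) ^ 2) < 0) ∧
      0 < y s := by
  have hn₁ : (1 : ℝ) < n := by exact_mod_cast hn
  have h𝔥' : ∀ z ∈ Ioo (-1 : ℝ) 1, DifferentiableAt ℝ 𝔥 z := fun z hz =>
    (h𝔥.differentiableOn one_ne_zero).differentiableAt
      (hU.mem_nhds (hIccU (Ioo_subset_Icc_self hz)))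
  have hpos' : ∀ z ∈ Ioo y₀ 1, 0 < 𝔥 z := fun z hz => hpos z (Ioo_subset_Ioc_self hz)
  have hΓ_lt_iff : ∀ z ∈ Ioo y₀ 1, ∀ X, Γ z < X ↔ 0 < gammaGap n 𝔥 X z := fun z hz X => by
    rw [hΓ z hz, div_lt_iff_gammaGap_pos (by positivity) (hpos' z hz)]
  have hG := gammaGap_pos_of_le hn₁ hIconn hmem hx hy h𝔥' hy₀0 hy₀ hpos' hs₀ h₁
    ((hΓ_lt_iff _ ⟨h₁, h₂⟩ _).1 h₃)
  intro s hs hs₀s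
  have hK : Icc s₀ s ⊆ I := hIconn.out hs₀ hs
  have hy₀s : y₀ < y s := lt_of_forall_gammaGap_nonneg (x := x) hn₁ hy₀
    (fun u hu => (hmem u (hK hu)).2) (fun u hu => (hy u (hK hu)).continuousAt.continuousWithinAt)
    h₁ (fun u hu => (hG u (hK hu) hu.1).le) s ⟨hs₀s, le_rfl⟩
  obtain ⟨hxs, hys⟩ := hmem s hs
  exact ⟨hy₀s, hys.2, (hΓ_lt_iff _ ⟨hy₀s, hys.2⟩ _).2 (hG s hs hs₀s),
    bowlField_neg hxs hys (hG s hs hs₀s), hy₀0.trans_lt hy₀s⟩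

/-- positive invariance of the monotonicity region
`Λ⁺ = {(x,y) : y₀ < y < 1, x > Γ(y)}` (where `Γ(y) = (n-1)√(1-y²)/(n𝔥(y))`) for the
phase-space system with `ε = 1`, in the situation `𝔥(y₀) = 0`, `𝔥 > 0` on `(y₀, 1]`:
once an orbit is in `Λ⁺`, it stays in `Λ⁺` for all later times, with `y' < 0` and
`x' > 0` there. -/
theorem bowl_region_invariant (n : ℕ) (hn : 2 ≤ n)
    (𝔥 : ℝ → ℝ) (U : Set ℝ) (hU : IsOpen U) (hIccU : Set.Icc (-1 : ℝ) 1 ⊆ U)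
    (h𝔥 : ContDiffOn ℝ 1 𝔥 U)
    (y₀ : ℝ) (hy₀0 : 0 ≤ y₀) (hy₀1 : y₀ < 1) (hy₀ : 𝔥 y₀ = 0)
    (hpos : ∀ y ∈ Set.Ioc y₀ 1, 0 < 𝔥 y)
    (Γ : ℝ → ℝ)
    (hΓ : ∀ y ∈ Set.Ioo y₀ 1, Γ y = ((n : ℝ) - 1) * Real.sqrt (1 - y ^ 2) / ((n : ℝ) * 𝔥 y))
    (I : Set ℝ) (hIconn : I.OrdConnected)
    (x y : ℝ → ℝ)
    (hmem : ∀ s ∈ I, 0 < x s ∧ y s ∈ Set.Ioo (-1 : ℝ) 1)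
    (hx : ∀ s ∈ I, HasDerivAt x (y s) s)
    (hy : ∀ s ∈ I, HasDerivAt y
      (((n : ℝ) - 1) * (1 - (y s) ^ 2) / x s
        - (n : ℝ) * 𝔥 (y s) * Real.sqrt (1 - (y s) ^ 2)) s)
    (s₀ : ℝ) (hs₀ : s₀ ∈ I) (h₁ : y₀ < y s₀) (h₂ : y s₀ < 1) (h₃ : Γ (y s₀) < x s₀) :
    ∀ s ∈ I, s₀ ≤ s →
      y₀ < y s ∧ y s < 1 ∧ Γ (y s) < x s ∧
      (((n : ℝ) - 1) * (1 - (y s) ^ 2) / x s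
        - (n : ℝ) * 𝔥 (y s) * Real.sqrt (1 - (y s) ^ 2) < 0) ∧
      0 < y s :=
  bowl_region_invariant_general n hn 𝔥 U hU hIccU h𝔥 y₀ hy₀0 hy₀ hpos Γ hΓ I hIconn x y hmem hx hy
    s₀ hs₀ h₁ h₂ h₃
end

section
/- Define f : (−1, 1) → ℝ by f(y) = √(1−y²)/arccos(y). Then f(y) → 1 as y → 1 from the left, and f extends to a continuously differentiable function on (−1, 1]; that is, there exists a function F, continuously differentiable on (−1, 1], with F(y) = f(y) for all y ∈ (−1, 1) and F(1) = 1. -/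
/-!
On `(-1, 1)` the function is `sinc ∘ arccos`, which is continuous on all of `ℝ` and equals
`sinc 0 = 1` at `y = 1`. Writing `t = arccos y`, its derivative is
`(sin t - t cos t) / (t² sin t)`, which tends to `1/3` as `y → 1⁻`, i.e. as `t → 0⁺`. A function
that is `C¹` on `(a, b)`, continuous at `b` and whose derivative has a limit at `b⁻` is `C¹`
on `(a, b]`.
-/

open Real Filter Set Topology Function

theorem contDiffOn_one_Ioc_of_tendsto_deriv {E : Type*} [NormedAddCommGroup E] [NormedSpace ℝ E]
    {f : ℝ → E} {a b : ℝ} {L : E} (hab : a < b) (hf : ContDiffOn ℝ 1 f (Ioo a b))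
    (hfb : ContinuousWithinAt f (Ioo a b) b) (hL : Tendsto (deriv f) (𝓝[<] b) (𝓝 L)) :
    ContDiffOn ℝ 1 f (Ioc a b) := by
  have hdiff := hf.differentiableOn one_ne_zero
  have hb : HasDerivWithinAt f L (Ioc a b) b :=
    (hasDerivWithinAt_Iic_of_tendsto_deriv hdiff hfb (Ioo_mem_nhdsLT hab) hL).mono
      Ioc_subset_Iic_self
  have hderiv : EqOn (derivWithin f (Ioc a b)) (update (deriv f) b L) (Ioc a b) := by
    intro x hx
    rcases hx.2.eq_or_lt with rfl | hxb
    · rw [update_self, hb.derivWithin (uniqueDiffOn_Ioc a x x hx)]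
    · rw [update_of_ne hxb.ne, derivWithin_of_mem_nhds (Ioc_mem_nhds hx.1 hxb)]
  rw [contDiffOn_one_iff_derivWithin (uniqueDiffOn_Ioc a b)]
  refine ⟨fun x hx => ?_, ContinuousOn.congr ?_ hderiv⟩
  · rcases hx.2.eq_or_lt with rfl | hxb
    · exact hb.differentiableWithinAt
    · exact ((hdiff x ⟨hx.1, hxb⟩).differentiableAt (Ioo_mem_nhds hx.1 hxb)).differentiableWithinAt
  · rw [continuousOn_update_iff, Ioc_sdiff_right, nhdsWithin_Ioo_eq_nhdsLT hab]
    exact ⟨hf.continuousOn_deriv_of_isOpen isOpen_Ioo le_rfl, fun _ => hL⟩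

theorem sinc_eventuallyEq_sin_div {x : ℝ} (hx : x ≠ 0) : sinc =ᶠ[𝓝 x] fun t => sin t / t := by
  filter_upwards [isOpen_ne.mem_nhds hx] with t ht using sinc_of_ne_zero ht

theorem hasDerivAt_sinc_of_ne_zero {x : ℝ} (hx : x ≠ 0) :
    HasDerivAt sinc ((x * cos x - sin x) / x ^ 2) x := by
  have := (hasDerivAt_sin x).div (hasDerivAt_id x) hx
  simp only [id, mul_one] at this
  rw [mul_comm]
  exact this.congr_of_eventuallyEq (sinc_eventuallyEq_sin_div hx)

theorem contDiffAt_sinc_of_ne_zero {x : ℝ} (hx : x ≠ 0) {n : WithTop ℕ∞} :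
    ContDiffAt ℝ n sinc x :=
  (contDiff_sin.contDiffAt.div contDiffAt_id hx).congr_of_eventuallyEq
    (sinc_eventuallyEq_sin_div hx)

theorem tendsto_sinc_nhdsGT_zero : Tendsto sinc (𝓝[>] 0) (𝓝 1) := by
  simpa using continuous_sinc.continuousAt.tendsto.mono_left (nhdsWithin_le_nhds (a := (0:ℝ)))

-- L'Hôpital: the quotient of the derivatives is `t sin t / 3t² = sinc t / 3`.
theorem tendsto_sin_sub_mul_cos_div_pow_three :
    Tendsto (fun t => (sin t - t * cos t) / t ^ 3) (𝓝[>] 0) (𝓝 (1 / 3)) := by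
  refine HasDerivAt.lhopital_zero_right_on_Ioo (f' := fun t => t * sin t)
    (g' := fun t => 3 * t ^ 2) one_pos (fun t _ => ?_) (fun t _ => ?_) (fun t ht => ?_) ?_ ?_ ?_
  · exact ((hasDerivAt_sin t).sub ((hasDerivAt_id t).mul (hasDerivAt_cos t))).congr_deriv
      (by simp only [id]; ring)
  · simpa using hasDerivAt_pow 3 t
  · have := ht.1; positivity
  · exact ((continuous_sin.sub (continuous_id.mul continuous_cos)).tendsto' 0 0
      (by simp)).mono_left nhdsWithin_le_nhds
  · exact ((continuous_pow 3).tendsto' 0 0 (by simp)).mono_left nhdsWithin_le_nhds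
  · refine (tendsto_sinc_nhdsGT_zero.div_const 3).congr' ?_
    filter_upwards [self_mem_nhdsWithin] with t (ht : 0 < t)
    rw [sinc_of_ne_zero ht.ne']
    field_simp

theorem tendsto_arccos_nhdsLT_one : Tendsto arccos (𝓝[<] 1) (𝓝[>] 0) := by
  refine tendsto_nhdsWithin_iff.2 ⟨?_, ?_⟩
  · simpa using continuous_arccos.continuousAt.tendsto.mono_left (nhdsWithin_le_nhds (a := (1:ℝ)))
  · filter_upwards [self_mem_nhdsWithin] with y hy using arccos_pos.2 hy

theorem hasDerivAt_sinc_arccos {y : ℝ} (hy : y ∈ Ioo (-1) 1) :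
    HasDerivAt (fun y => sinc (arccos y))
      ((sin (arccos y) - arccos y * cos (arccos y)) / (arccos y ^ 2 * sin (arccos y))) y := by
  have ht : arccos y ≠ 0 := (arccos_pos.2 hy.2).ne'
  have hs : sin (arccos y) ≠ 0 := by
    rw [sin_arccos]; exact (sqrt_pos.2 (by nlinarith [hy.1, hy.2])).ne'
  refine ((hasDerivAt_sinc_of_ne_zero ht).comp y
    (hasDerivAt_arccos hy.1.ne' hy.2.ne)).congr_deriv ?_
  rw [← sin_arccos]
  field_simp
  ring

theorem contDiffOn_sinc_arccos {n : WithTop ℕ∞} :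
    ContDiffOn ℝ n (fun y => sinc (arccos y)) (Ioo (-1) 1) := fun y hy =>
  ((contDiffAt_sinc_of_ne_zero (arccos_pos.2 hy.2).ne').comp y
    (contDiffAt_arccos hy.1.ne' hy.2.ne)).contDiffWithinAt

theorem tendsto_deriv_sinc_arccos :
    Tendsto (deriv fun y => sinc (arccos y)) (𝓝[<] 1) (𝓝 (1 / 3)) := by
  have hlim : Tendsto (fun t => (sin t - t * cos t) / t ^ 3 / sinc t) (𝓝[>] 0) (𝓝 (1 / 3)) := by
    have := tendsto_sin_sub_mul_cos_div_pow_three.div tendsto_sinc_nhdsGT_zero one_ne_zero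
    rwa [div_one] at this
  refine (hlim.comp tendsto_arccos_nhdsLT_one).congr' ?_
  filter_upwards [Ioo_mem_nhdsLT (show (-1 : ℝ) < 1 by norm_num)] with y hy
  have ht : arccos y ≠ 0 := (arccos_pos.2 hy.2).ne'
  rw [(hasDerivAt_sinc_arccos hy).deriv, comp_apply, sinc_of_ne_zero ht]
  field_simp

/-- the function `f(y) = √(1-y²)/arccos(y)` on `(-1,1)` tends to `1` as
`y → 1⁻` and extends to a continuously differentiable function on `(-1, 1]` with value
`1` at `y = 1`. -/
theorem sqrt_div_arccos_C1_extension (f : ℝ → ℝ)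
    (hf : ∀ y ∈ Set.Ioo (-1 : ℝ) 1, f y = Real.sqrt (1 - y ^ 2) / Real.arccos y) :
    Filter.Tendsto f (nhdsWithin 1 (Set.Ioo (-1 : ℝ) 1)) (nhds 1) ∧
    ∃ F : ℝ → ℝ, ContDiffOn ℝ 1 F (Set.Ioc (-1 : ℝ) 1) ∧
      (∀ y ∈ Set.Ioo (-1 : ℝ) 1, F y = f y) ∧ F 1 = 1 := by
  have hF : ∀ y ∈ Ioo (-1 : ℝ) 1, sinc (arccos y) = f y := fun y hy => by
    rw [hf y hy, sinc_of_ne_zero (arccos_pos.2 hy.2).ne', sin_arccos]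
  have hcont : Continuous fun y => sinc (arccos y) := continuous_sinc.comp continuous_arccos
  have hF1 : sinc (arccos 1) = 1 := by simp
  refine ⟨?_, fun y => sinc (arccos y), ?_, hF, hF1⟩
  · refine (hF1 ▸ hcont.continuousWithinAt.tendsto).congr' ?_
    filter_upwards [self_mem_nhdsWithin] with y hy using hF y hy
  · exact contDiffOn_one_Ioc_of_tendsto_deriv (by norm_num) contDiffOn_sinc_arccos
      hcont.continuousWithinAt tendsto_deriv_sinc_arccos
end
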